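/- (Scalar angular momentum derivative along the relativistic flow.) Let r satisfy the relativistic two-body equation and let h(t) = r(t) × r'(t). Then the scalar function ρ(t) = ‖r(t)‖ is differentiable with ρ'(t) = ⟨r(t), r'(t)⟩/‖r(t)‖, and h'(t) = (4ε ρ'(t)/ρ(t)²) • h(t) for all t. -/

import Mathlib

/-!
The equation of motion has the form `r'' = α r + β r'` with `β = 4ε⟨r, r'⟩ / ‖r‖⁴`. Since
`h' = r' × r' + r × r'' = r × r''`, the radial part of the force drops out and `h' = β h`;
finally `β = 4ε ρ' / ρ²` because `ρ' = ⟨r, r'⟩ / ‖r‖`.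
-/

noncomputable def cross3 (a b : EuclideanSpace ℝ (Fin 3)) : EuclideanSpace ℝ (Fin 3) :=
  WithLp.toLp 2 ![a 1 * b 2 - a 2 * b 1, a 2 * b 0 - a 0 * b 2, a 0 * b 1 - a 1 * b 0]

open RealInnerProductSpace

theorem HasDerivAt.norm_of_ne_zero {F : Type*} [NormedAddCommGroup F] [InnerProductSpace ℝ F]
    {f : ℝ → F} {f' : F} {x : ℝ} (hf : HasDerivAt f f' x) (h0 : f x ≠ 0) :
    HasDerivAt (fun t => ‖f t‖) (⟪f x, f'⟫ / ‖f x‖) x := by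
  have h := hf.norm_sq.sqrt (pow_ne_zero 2 (norm_ne_zero_iff.mpr h0))
  simp only [Real.sqrt_sq (norm_nonneg _)] at h
  convert h using 1
  field_simp

theorem ContDiff.hasDerivAt_deriv {E : Type*} [NormedAddCommGroup E] [NormedSpace ℝ E]
    {f : ℝ → E} {n : WithTop ℕ∞} (hf : ContDiff ℝ n f) (hn : 2 ≤ n) (t : ℝ) :
    HasDerivAt (deriv f) (deriv (deriv f) t) t :=
  (((hf.of_le hn).iterate_deriv' 1 1).differentiable one_ne_zero t).hasDerivAt

local notation "E³" => EuclideanSpace ℝ (Fin 3)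

noncomputable def cross3Bilin : E³ →L[ℝ] E³ →L[ℝ] E³ :=
  LinearMap.toContinuousLinearMap <| LinearMap.toContinuousLinearMap.toLinearMap ∘ₗ
    ((crossProduct.compl₁₂ (WithLp.linearEquiv 2 ℝ (Fin 3 → ℝ)).toLinearMap
      (WithLp.linearEquiv 2 ℝ (Fin 3 → ℝ)).toLinearMap).compr₂
        (WithLp.linearEquiv 2 ℝ (Fin 3 → ℝ)).symm.toLinearMap)

@[simp] theorem cross3Bilin_apply (a b : E³) : cross3Bilin a b = cross3 a b := rfl

theorem cross3_self (a : E³) : cross3 a a = 0 := by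
  ext i; fin_cases i <;> simp [cross3] <;> ring

theorem cross3_smul_add_smul (x v : E³) (α β : ℝ) :
    cross3 x (α • x + β • v) = β • cross3 x v := by
  rw [← cross3Bilin_apply, map_add, map_smul, map_smul, cross3Bilin_apply, cross3Bilin_apply,
    cross3_self, smul_zero, zero_add]

theorem HasDerivAt.cross3 {u v : ℝ → E³} {u' v' : E³} {t : ℝ} (hu : HasDerivAt u u' t)
    (hv : HasDerivAt v v' t) :
    HasDerivAt (fun s => cross3 (u s) (v s)) (cross3 (u t) v' + cross3 u' (v t)) t :=
  cross3Bilin.hasDerivAt_of_bilinear (fun _ => hu) (fun _ => hv)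

theorem hasDerivAt_cross3_of_hasDerivAt_smul_add_smul {r v : ℝ → E³} {t α β : ℝ}
    (hr : HasDerivAt r (v t) t) (hv : HasDerivAt v (α • r t + β • v t) t) :
    HasDerivAt (fun s => cross3 (r s) (v s)) (β • cross3 (r t) (v t)) t := by
  simpa [cross3_self, cross3_smul_add_smul] using hr.cross3 hv

theorem scalar_angular_momentum_derivative (ε : ℝ) (r : ℝ → EuclideanSpace ℝ (Fin 3))
    (hr : ContDiff ℝ 2 r) (hrne : ∀ t, r t ≠ 0)
    (heq : ∀ t, deriv (deriv r) t =
      (-(1 / ‖r t‖ ^ 3)) • r t +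
        (ε / ‖r t‖ ^ 3) •
          ((4 / ‖r t‖ - ‖deriv r t‖ ^ 2) • r t +
            (4 * (inner ℝ (r t) (deriv r t) : ℝ)) • deriv r t))
    (h : ℝ → EuclideanSpace ℝ (Fin 3))
    (hh : ∀ t, h t = cross3 (r t) (deriv r t))
    (ρ : ℝ → ℝ) (hρ : ∀ t, ρ t = ‖r t‖) :
    (∀ t : ℝ, HasDerivAt ρ ((inner ℝ (r t) (deriv r t) : ℝ) / ‖r t‖) t) ∧
      (∀ t : ℝ, deriv h t = (4 * ε * deriv ρ t / ρ t ^ 2) • h t) := by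
  have hr' (t : ℝ) : HasDerivAt r (deriv r t) t :=
    (hr.differentiable two_ne_zero t).hasDerivAt
  have hρ' (t : ℝ) : HasDerivAt ρ ((inner ℝ (r t) (deriv r t) : ℝ) / ‖r t‖) t :=
    funext hρ ▸ (hr' t).norm_of_ne_zero (hrne t)
  refine ⟨hρ', fun t => ?_⟩
  have hr'' : HasDerivAt (deriv r)
      ((-(1 / ‖r t‖ ^ 3) + ε / ‖r t‖ ^ 3 * (4 / ‖r t‖ - ‖deriv r t‖ ^ 2)) • r t +
        (4 * ε * (inner ℝ (r t) (deriv r t) / ‖r t‖) / ‖r t‖ ^ 2) • deriv r t) t := by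
    refine (hr.hasDerivAt_deriv le_rfl t).congr_deriv ?_
    rw [heq t]
    module
  have hh' := hasDerivAt_cross3_of_hasDerivAt_smul_add_smul (hr' t) hr''
  rw [← funext hh, ← hh t] at hh'
  rw [hh'.deriv, (hρ' t).deriv, hρ t]
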